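/- Let G1, G2, Δ be n×n real matrices with ‖Δ‖_op ≤ ε. Then |Tr(G1 Δ G2 Δᵀ)| ≤ ε² Σ_{i=1}^n σ_i(G1) σ_i(G2), where σ_i denotes the i-th largest singular value. -/

import Mathlib

/-!
Write `Gₖ = Uₖ * diagonal σₖ * Vₖᵀ` with `‖Uₖ‖, ‖Vₖ‖ ≤ 1` (a singular value decomposition). By
cyclicity of the trace, `Tr (G₁ Δ G₂ Δᵀ) = ∑ i j, σ₁ i * A i j * σ₂ j * B j i` with
`A = V₁ᵀ Δ U₂` and `B = V₂ᵀ Δᵀ U₁`, both of operator norm at most `ε`. Bounding `|A i j * B j i|` by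
`(A i j ^ 2 + B j i ^ 2) / 2` leaves a nonnegative matrix `D` whose row and column sums are at most
`ε ^ 2`, since each row and column of `A` and `B` has Euclidean norm at most `ε`. For such `D` and
nonincreasing nonnegative `f`, `g`, one has `∑ i j, f i * D i j * g j ≤ ε ^ 2 * ∑ i, f i * g i`: the
prefix sums of `j ↦ ∑ i, f i * D i j` are dominated by those of `ε ^ 2 * f` (bathtub principle), and
Abel summation against the nonincreasing `g` concludes.
-/

open Matrix

/-- `σ` lists the singular values of the square real matrix `A` in nonincreasing
order: it is an antitone enumeration of the square roots of the eigenvalues of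
`Aᵀ * A` (= `Aᴴ * A` over ℝ). -/
def IsSingularValueSeq {n : ℕ} (A : Matrix (Fin n) (Fin n) ℝ) (σ : Fin n → ℝ) : Prop :=
  Antitone σ ∧ ∃ e : Equiv.Perm (Fin n), ∀ i,
    σ i = Real.sqrt ((show (Aᵀ * A).IsHermitian by simpa using Matrix.isHermitian_conjTranspose_mul_self A).eigenvalues (e i))

section Rearrangement

open Finset

variable {ι : Type*} [LinearOrder ι]

theorem Finset.sum_mul_nonneg_of_antitone_of_prefix_sum_nonneg {s : Finset ι} {d g : ι → ℝ}
    (hg : Antitone g) (hg0 : ∀ j ∈ s, 0 ≤ g j)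
    (hd : ∀ l ∈ s, 0 ≤ ∑ j ∈ s with j ≤ l, d j) :
    0 ≤ ∑ j ∈ s, d j * g j := by
  classical
  induction s using Finset.induction_on_max generalizing g with
  | empty => simp
  | insert a t hlt ih =>
    have ha : a ∉ t := fun h => lt_irrefl a (hlt a h)
    have hsplit : ∑ j ∈ insert a t, d j * g j
        = ∑ j ∈ t, d j * (g j - g a) + (∑ j ∈ insert a t, d j) * g a := by
      rw [sum_insert ha, sum_insert ha]
      simp only [mul_sub, sum_sub_distrib, add_mul, sum_mul]
      ring
    have htail : 0 ≤ ∑ j ∈ t, d j * (g j - g a) := by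
      refine ih (fun i j hij => sub_le_sub_right (hg hij) _)
        (fun j hj => sub_nonneg.2 (hg (hlt j hj).le)) fun l hl => ?_
      have := hd l (mem_insert_of_mem hl)
      rwa [filter_insert, if_neg (not_le.2 (hlt l hl))] at this
    have hfull : 0 ≤ ∑ j ∈ insert a t, d j := by
      have := hd a (mem_insert_self a t)
      rwa [filter_true_of_mem fun j hj => ?_] at this
      rcases mem_insert.1 hj with rfl | hj
      exacts [le_rfl, (hlt j hj).le]
    rw [hsplit]
    exact add_nonneg htail (mul_nonneg hfull (hg0 a (mem_insert_self a t)))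

variable [Fintype ι]

-- Bathtub principle: weights `w ≤ c` of total mass at most `c · #{i ≤ l}` do best on `i ≤ l`.
theorem sum_mul_le_mul_sum_filter_le_of_antitone {f w : ι → ℝ} {c : ℝ} (l : ι)
    (hf : Antitone f) (hfl : 0 ≤ f l) (hw0 : ∀ i, 0 ≤ w i) (hwc : ∀ i, w i ≤ c)
    (hw : ∑ i, w i ≤ c * #{i | i ≤ l}) :
    ∑ i, f i * w i ≤ c * ∑ i with i ≤ l, f i := by
  have hpt : ∀ i, f i * w i - (if i ≤ l then c * f i else 0)
      ≤ f l * (w i - if i ≤ l then c else 0) := by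
    intro i
    split_ifs with hi
    · nlinarith [hf hi, hwc i]
    · nlinarith [hf (le_of_not_ge hi), hw0 i]
  have := sum_le_sum fun i (_ : i ∈ univ) => hpt i
  simp only [sum_sub_distrib, ← mul_sum, ← sum_filter, sum_const, nsmul_eq_mul] at this
  nlinarith

theorem sum_sum_mul_mul_le_of_row_sum_le_of_col_sum_le {f g : ι → ℝ} {D : ι → ι → ℝ} {c : ℝ}
    (hf : Antitone f) (hf0 : ∀ i, 0 ≤ f i) (hg : Antitone g) (hg0 : ∀ j, 0 ≤ g j)
    (hD0 : ∀ i j, 0 ≤ D i j) (hrow : ∀ i, ∑ j, D i j ≤ c) (hcol : ∀ j, ∑ i, D i j ≤ c) :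
    ∑ i, ∑ j, f i * D i j * g j ≤ c * ∑ i, f i * g i := by
  have hprefix : ∀ l, ∑ j with j ≤ l, ∑ i, f i * D i j ≤ c * ∑ j with j ≤ l, f j := by
    intro l
    rw [sum_comm]
    simp only [← mul_sum]
    refine sum_mul_le_mul_sum_filter_le_of_antitone l hf (hf0 l)
      (fun i => sum_nonneg fun j _ => hD0 i j)
      (fun i => (sum_le_sum_of_subset_of_nonneg (filter_subset _ _) fun j _ _ => hD0 i j).trans
        (hrow i)) ?_
    rw [sum_comm]
    calc ∑ j with j ≤ l, ∑ i, D i j ≤ ∑ j with j ≤ l, c := sum_le_sum fun j _ => hcol j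
      _ = c * #{j | j ≤ l} := by rw [sum_const, nsmul_eq_mul, mul_comm]
  have := sum_mul_nonneg_of_antitone_of_prefix_sum_nonneg (s := univ)
    (d := fun j => c * f j - ∑ i, f i * D i j) hg (fun j _ => hg0 j) fun l _ => by
      simpa only [sum_sub_distrib, ← mul_sum, sub_nonneg] using hprefix l
  simp only [sub_mul, sum_sub_distrib, sum_mul, sub_nonneg] at this
  rw [sum_comm, mul_sum]
  simpa only [mul_assoc] using this

end Rearrangement

open scoped Matrix.Norms.L2Operator

section L2OpNorm

variable {𝕜 m n : Type*} [RCLike 𝕜] [Fintype m] [Fintype n] [DecidableEq n]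

theorem Matrix.sum_col_norm_sq_le_l2_opNorm_sq (A : Matrix m n 𝕜) (j : n) :
    ∑ i, ‖A i j‖ ^ 2 ≤ ‖A‖ ^ 2 := by
  have h := A.l2_opNorm_mulVec (EuclideanSpace.single j (1 : 𝕜))
  rw [PiLp.norm_single, norm_one, mul_one] at h
  have hcol : ∑ i, ‖A i j‖ ^ 2
      = ‖(EuclideanSpace.equiv m 𝕜).symm (A *ᵥ EuclideanSpace.single j (1 : 𝕜))‖ ^ 2 := by
    rw [EuclideanSpace.norm_sq_eq]
    simp
  rw [hcol]
  gcongr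

theorem Matrix.sum_row_norm_sq_le_l2_opNorm_sq [DecidableEq m] (A : Matrix m n 𝕜) (i : m) :
    ∑ j, ‖A i j‖ ^ 2 ≤ ‖A‖ ^ 2 := by
  simpa [l2_opNorm_conjTranspose] using Aᴴ.sum_col_norm_sq_le_l2_opNorm_sq i

theorem Matrix.l2_opNorm_conjTranspose_mul_mul_le {l k : Type*} [Fintype l] [DecidableEq l]
    [Fintype k] [DecidableEq k] [DecidableEq m] {X : Matrix m l 𝕜} {Y : Matrix n k 𝕜}
    (hX : ‖X‖ ≤ 1) (hY : ‖Y‖ ≤ 1) (M : Matrix m n 𝕜) :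
    ‖Xᴴ * M * Y‖ ≤ ‖M‖ :=
  calc ‖Xᴴ * M * Y‖ ≤ ‖Xᴴ‖ * ‖M‖ * ‖Y‖ :=
        (l2_opNorm_mul _ _).trans (by gcongr; exact l2_opNorm_mul _ _)
    _ ≤ 1 * ‖M‖ * 1 := by gcongr; rwa [l2_opNorm_conjTranspose]
    _ = ‖M‖ := by ring

theorem Matrix.l2_opNorm_le_one_of_conjTranspose_mul_self_eq_diagonal {A : Matrix m n 𝕜}
    {d : n → 𝕜} (hA : Aᴴ * A = diagonal d) (hd : ∀ i, ‖d i‖ ≤ 1) : ‖A‖ ≤ 1 := by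
  have : ‖A‖ * ‖A‖ ≤ 1 := by
    rw [← l2_opNorm_conjTranspose_mul_self, hA, l2_opNorm_diagonal]
    exact (pi_norm_le_iff_of_nonneg zero_le_one).2 hd
  nlinarith [norm_nonneg A]

end L2OpNorm

theorem Matrix.exists_eq_mul_diagonal_of_transpose_mul_self_eq_diagonal {m n : Type*} [Fintype m]
    [Fintype n] [DecidableEq n] {W : Matrix m n ℝ} {σ : n → ℝ}
    (hW : Wᵀ * W = diagonal fun i => σ i ^ 2) :
    ∃ U : Matrix m n ℝ, ‖U‖ ≤ 1 ∧ W = U * diagonal σ := by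
  have hcol : ∀ k j, σ j = 0 → W k j = 0 := by
    intro k j hj
    have hsum : ∑ k, W k j ^ 2 = 0 := by
      simpa [hj, mul_apply, sq] using congrFun (congrFun hW j) j
    exact pow_eq_zero_iff two_ne_zero |>.1 <|
      (Finset.sum_eq_zero_iff_of_nonneg fun k _ => sq_nonneg _).1 hsum k (Finset.mem_univ k)
  refine ⟨W * diagonal fun i => (σ i)⁻¹, ?_, ?_⟩
  · refine l2_opNorm_le_one_of_conjTranspose_mul_self_eq_diagonal
      (d := fun i => (σ i)⁻¹ * (σ i ^ 2 * (σ i)⁻¹)) ?_ fun i => ?_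
    · rw [conjTranspose_eq_transpose_of_trivial, transpose_mul, diagonal_transpose,
        Matrix.mul_assoc, ← Matrix.mul_assoc Wᵀ, hW, diagonal_mul_diagonal, diagonal_mul_diagonal]
    · rcases eq_or_ne (σ i) 0 with hi | hi
      · simp [hi]
      · rw [show (σ i)⁻¹ * (σ i ^ 2 * (σ i)⁻¹) = 1 by field_simp, norm_one]
  · rw [Matrix.mul_assoc, diagonal_mul_diagonal]
    ext k j
    rcases eq_or_ne (σ j) 0 with hj | hj
    · simp [hcol k j hj]
    · simp [inv_mul_cancel₀ hj]

theorem Matrix.IsHermitian.exists_orthogonal_transpose_mul_mul_eq_diagonal {ι : Type*} [Fintype ι]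
    [DecidableEq ι] {S : Matrix ι ι ℝ} (hS : S.IsHermitian) (e : Equiv.Perm ι) :
    ∃ V : Matrix ι ι ℝ, V * Vᵀ = 1 ∧ Vᵀ * V = 1 ∧
      Vᵀ * S * V = diagonal (hS.eigenvalues ∘ e) := by
  set U : Matrix ι ι ℝ := ↑hS.eigenvectorUnitary
  have hU : U ∈ unitary (Matrix ι ι ℝ) := hS.eigenvectorUnitary.2
  have hUt : star U = Uᵀ := by
    rw [star_eq_conjTranspose, conjTranspose_eq_transpose_of_trivial]
  have hdiag : Uᵀ * S * U = diagonal hS.eigenvalues := by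
    rw [← hUt]
    simpa [RCLike.ofReal_real_eq_id] using hS.conjStarAlgAut_star_eigenvectorUnitary
  refine ⟨U.submatrix id e, ?_, ?_, ?_⟩
  · rw [transpose_submatrix, submatrix_mul_equiv, ← hUt, Unitary.mul_star_self_of_mem hU]
    rfl
  · change (Uᵀ * U).submatrix e e = 1
    rw [← hUt, Unitary.star_mul_self_of_mem hU]
    exact submatrix_one_equiv e
  · change (Uᵀ * S * U).submatrix e e = _
    rw [hdiag]
    exact submatrix_diagonal_equiv _ e

namespace IsSingularValueSeq

variable {n : ℕ} {A : Matrix (Fin n) (Fin n) ℝ} {σ : Fin n → ℝ}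

theorem nonneg (h : IsSingularValueSeq A σ) (i : Fin n) : 0 ≤ σ i := by
  obtain ⟨-, e, he⟩ := h
  exact he i ▸ Real.sqrt_nonneg _

theorem exists_orthogonal_transpose_mul_self_eq_diagonal (h : IsSingularValueSeq A σ) :
    ∃ V : Matrix (Fin n) (Fin n) ℝ, V * Vᵀ = 1 ∧ Vᵀ * V = 1 ∧
      (A * V)ᵀ * (A * V) = diagonal fun i => σ i ^ 2 := by
  obtain ⟨-, e, he⟩ := h
  obtain ⟨V, hVVt, hVtV, hV⟩ := IsHermitian.exists_orthogonal_transpose_mul_mul_eq_diagonal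
    (by simpa using isHermitian_conjTranspose_mul_self A : (Aᵀ * A).IsHermitian) e
  refine ⟨V, hVVt, hVtV, ?_⟩
  rw [transpose_mul, Matrix.mul_assoc, ← Matrix.mul_assoc Aᵀ, ← Matrix.mul_assoc, hV]
  congr 1
  funext i
  rw [he i]
  exact (Real.sq_sqrt (eigenvalues_conjTranspose_mul_self_nonneg A (e i))).symm

theorem exists_eq_mul_diagonal_mul_transpose (h : IsSingularValueSeq A σ) :
    ∃ U V : Matrix (Fin n) (Fin n) ℝ, ‖U‖ ≤ 1 ∧ ‖V‖ ≤ 1 ∧ A = U * diagonal σ * Vᵀ := by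
  obtain ⟨V, hVVt, hVtV, hAV⟩ := h.exists_orthogonal_transpose_mul_self_eq_diagonal
  obtain ⟨U, hU, hAVU⟩ := exists_eq_mul_diagonal_of_transpose_mul_self_eq_diagonal hAV
  have hV : ‖V‖ ≤ 1 :=
    l2_opNorm_le_one_of_conjTranspose_mul_self_eq_diagonal (d := fun _ => 1)
      (by rw [conjTranspose_eq_transpose_of_trivial, hVtV, diagonal_one]) (by simp)
  exact ⟨U, V, hU, hV, by rw [← hAVU, Matrix.mul_assoc, hVVt, Matrix.mul_one]⟩

end IsSingularValueSeq

theorem Matrix.abs_trace_diagonal_mul_mul_diagonal_mul_le {ι : Type*} [Fintype ι] [LinearOrder ι]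
    {σ τ : ι → ℝ} {A B : Matrix ι ι ℝ} {ε : ℝ} (hσ : Antitone σ) (hσ0 : ∀ i, 0 ≤ σ i)
    (hτ : Antitone τ) (hτ0 : ∀ i, 0 ≤ τ i) (hA : ‖A‖ ≤ ε) (hB : ‖B‖ ≤ ε) :
    |(diagonal σ * A * diagonal τ * B).trace| ≤ ε ^ 2 * ∑ i, σ i * τ i := by
  have hsq : ∀ M : Matrix ι ι ℝ, ‖M‖ ≤ ε →
      (∀ i, ∑ j, M i j ^ 2 ≤ ε ^ 2) ∧ ∀ j, ∑ i, M i j ^ 2 ≤ ε ^ 2 := by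
    intro M hM
    have hM2 : ‖M‖ ^ 2 ≤ ε ^ 2 := pow_le_pow_left₀ (norm_nonneg M) hM 2
    refine ⟨fun i => ?_, fun j => ?_⟩
    · simpa only [Real.norm_eq_abs, sq_abs] using (M.sum_row_norm_sq_le_l2_opNorm_sq i).trans hM2
    · simpa only [Real.norm_eq_abs, sq_abs] using (M.sum_col_norm_sq_le_l2_opNorm_sq j).trans hM2
  obtain ⟨hArow, hAcol⟩ := hsq A hA
  obtain ⟨hBrow, hBcol⟩ := hsq B hB
  have htrace : (diagonal σ * A * diagonal τ * B).trace
      = ∑ i, ∑ j, σ i * (A i j * B j i) * τ j := by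
    refine Finset.sum_congr rfl fun i _ => ?_
    rw [diag_apply, mul_apply]
    refine Finset.sum_congr rfl fun j _ => ?_
    rw [mul_diagonal, diagonal_mul]
    ring
  let D i j := (A i j ^ 2 + B j i ^ 2) / 2
  calc |(diagonal σ * A * diagonal τ * B).trace| ≤ ∑ i, ∑ j, σ i * D i j * τ j := by
        rw [htrace]
        refine (Finset.abs_sum_le_sum_abs _ _).trans <| Finset.sum_le_sum fun i _ =>
          (Finset.abs_sum_le_sum_abs _ _).trans <| Finset.sum_le_sum fun j _ => ?_
        have hAB : |A i j * B j i| ≤ D i j := by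
          change _ ≤ (A i j ^ 2 + B j i ^ 2) / 2
          rw [abs_mul, ← sq_abs (A i j), ← sq_abs (B j i)]
          linarith [two_mul_le_add_sq |A i j| |B j i|]
        rw [abs_mul, abs_mul, abs_of_nonneg (hσ0 i), abs_of_nonneg (hτ0 j)]
        exact mul_le_mul_of_nonneg_right (mul_le_mul_of_nonneg_left hAB (hσ0 i)) (hτ0 j)
    _ ≤ ε ^ 2 * ∑ i, σ i * τ i := by
        refine sum_sum_mul_mul_le_of_row_sum_le_of_col_sum_le hσ hσ0 hτ hτ0
          (fun i j => by positivity) (fun i => ?_) fun j => ?_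
        · simp only [D, ← Finset.sum_div, Finset.sum_add_distrib]
          linarith [hArow i, hBcol i]
        · simp only [D, ← Finset.sum_div, Finset.sum_add_distrib]
          linarith [hAcol j, hBrow j]

theorem trace_quadratic_perturbation_bound {n : ℕ}
    (G1 G2 Δ : Matrix (Fin n) (Fin n) ℝ) (ε : ℝ)
    (σ1 σ2 : Fin n → ℝ)
    (h1 : IsSingularValueSeq G1 σ1) (h2 : IsSingularValueSeq G2 σ2)
    (hΔ : ‖Matrix.toEuclideanCLM (𝕜 := ℝ) Δ‖ ≤ ε) :
    |(G1 * Δ * G2 * Δᵀ).trace| ≤ ε ^ 2 * ∑ i, σ1 i * σ2 i := by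
  obtain ⟨U1, V1, hU1, hV1, hG1⟩ := h1.exists_eq_mul_diagonal_mul_transpose
  obtain ⟨U2, V2, hU2, hV2, hG2⟩ := h2.exists_eq_mul_diagonal_mul_transpose
  rw [l2_opNorm_toEuclideanCLM] at hΔ
  have hΔt : ‖Δᵀ‖ ≤ ε := by rwa [← conjTranspose_eq_transpose_of_trivial, l2_opNorm_conjTranspose]
  have hsandwich : ∀ {X Y M : Matrix (Fin n) (Fin n) ℝ}, ‖X‖ ≤ 1 → ‖Y‖ ≤ 1 → ‖M‖ ≤ ε →
      ‖Xᵀ * M * Y‖ ≤ ε := fun hX hY hM => by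
    simpa only [conjTranspose_eq_transpose_of_trivial] using
      (l2_opNorm_conjTranspose_mul_mul_le hX hY _).trans hM
  have hcycle : (G1 * Δ * G2 * Δᵀ).trace
      = (diagonal σ1 * (V1ᵀ * Δ * U2) * diagonal σ2 * (V2ᵀ * Δᵀ * U1)).trace := by
    rw [hG1, hG2]
    simp only [Matrix.mul_assoc]
    rw [trace_mul_comm U1]
    simp only [Matrix.mul_assoc]
  rw [hcycle]
  exact abs_trace_diagonal_mul_mul_diagonal_mul_le h1.1 h1.nonneg h2.1 h2.nonneg
    (hsandwich hV1 hU2 hΔ) (hsandwich hV2 hU1 hΔt)
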